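/- In the quadratic dual algebra U(tr_n)^!, which is the exterior (anti-symmetric) algebra on generators x_{ij} (i<j) modulo the additional relations x_{ij}x_{jk} = x_{ik}x_{jk} = x_{jk}x_{ij} = x_{ij}x_{ik} for all i < j < k, every monomial in the generators whose index graph contains a cycle is zero; in particular x_{12}x_{13}x_{23} = 0 in U(tr_3)^!. -/

import Mathlib

/-- Index set for generators `x_{ij}`, `1 ≤ i < j ≤ n`. -/
abbrev TrEdge (n : ℕ) := {p : Fin n × Fin n // p.1 < p.2}

/-- The generator `x_{ij}` of the free algebra. -/
noncomputable def xf (n : ℕ) (e : TrEdge n) : FreeAlgebra ℂ (TrEdge n) :=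
  FreeAlgebra.ι ℂ e

/-- Defining relations of the quadratic dual `U(tr_n)^!`: the generators square to zero,
anticommute, and satisfy `x_{ij}x_{jk} = x_{ik}x_{jk} = x_{jk}x_{ij} = x_{ij}x_{ik}`
for `i < j < k`. -/
inductive TrDualRel (n : ℕ) : FreeAlgebra ℂ (TrEdge n) → FreeAlgebra ℂ (TrEdge n) → Prop
  | sq (e : TrEdge n) : TrDualRel n (xf n e * xf n e) 0
  | anti (e e' : TrEdge n) : TrDualRel n (xf n e * xf n e') (-(xf n e' * xf n e))
  | tri₁ (i j k : Fin n) (hij : i < j) (hjk : j < k) :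
      TrDualRel n (xf n ⟨(i, j), hij⟩ * xf n ⟨(j, k), hjk⟩)
        (xf n ⟨(i, k), hij.trans hjk⟩ * xf n ⟨(j, k), hjk⟩)
  | tri₂ (i j k : Fin n) (hij : i < j) (hjk : j < k) :
      TrDualRel n (xf n ⟨(i, k), hij.trans hjk⟩ * xf n ⟨(j, k), hjk⟩)
        (xf n ⟨(j, k), hjk⟩ * xf n ⟨(i, j), hij⟩)
  | tri₃ (i j k : Fin n) (hij : i < j) (hjk : j < k) :
      TrDualRel n (xf n ⟨(j, k), hjk⟩ * xf n ⟨(i, j), hij⟩)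
        (xf n ⟨(i, j), hij⟩ * xf n ⟨(i, k), hij.trans hjk⟩)

/-- The quadratic dual algebra `U(tr_n)^!`. -/
abbrev TrDual (n : ℕ) := RingQuot (TrDualRel n)

/-- The generator `x_{ij}` of `U(tr_n)^!`. -/
noncomputable def xd (n : ℕ) (e : TrEdge n) : TrDual n :=
  RingQuot.mkAlgHom ℂ (TrDualRel n) (xf n e)


lemma xd_rel {n : ℕ} {a b : FreeAlgebra ℂ (TrEdge n)} (h : TrDualRel n a b) :
    RingQuot.mkAlgHom ℂ (TrDualRel n) a = RingQuot.mkAlgHom ℂ (TrDualRel n) b :=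
  RingQuot.mkAlgHom_rel ℂ h

lemma xd_anti (n : ℕ) (e e' : TrEdge n) :
    xd n e * xd n e' = -(xd n e' * xd n e) := by
  have := xd_rel (TrDualRel.anti (n := n) e e')
  simpa [xd, map_mul, map_neg] using this

lemma xd_sq (n : ℕ) (e : TrEdge n) : xd n e * xd n e = 0 := by
  have := xd_rel (TrDualRel.sq (n := n) e)
  simpa [xd, map_mul] using this

lemma xd_anti_add (n : ℕ) (e e' : TrEdge n) :
    xd n e * xd n e' + xd n e' * xd n e = 0 := by
  have h := xd_rel (TrDualRel.anti (n := n) e e')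
  have h2 : (RingQuot.mkAlgHom ℂ (TrDualRel n)) (xf n e * xf n e') +
      (RingQuot.mkAlgHom ℂ (TrDualRel n)) (xf n e' * xf n e) =
      (RingQuot.mkAlgHom ℂ (TrDualRel n)) (xf n e * xf n e' + xf n e' * xf n e) :=
    (map_add _ _ _).symm
  have h3 : xf n e * xf n e' + xf n e' * xf n e =
      (xf n e * xf n e' - -(xf n e' * xf n e)) := (sub_neg_eq_add _ _).symm
  calc xd n e * xd n e' + xd n e' * xd n e
      = (RingQuot.mkAlgHom ℂ (TrDualRel n)) (xf n e * xf n e' + xf n e' * xf n e) := by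
        rw [← h2]; rw [xd, xd, map_mul, map_mul]
    _ = (RingQuot.mkAlgHom ℂ (TrDualRel n)) (xf n e * xf n e')
        - (RingQuot.mkAlgHom ℂ (TrDualRel n)) (-(xf n e' * xf n e)) := by
        rw [h3, map_sub]
    _ = 0 := by rw [h]; exact sub_self _

lemma xd_rev_zero (n : ℕ) {e e' : TrEdge n} (h : xd n e * xd n e' = 0) :
    xd n e' * xd n e = 0 := by
  have h2 := xd_anti_add n e' e
  rw [h, add_zero] at h2
  exact h2

lemma xd_tri (n : ℕ) (i j k : Fin n) (hij : i < j) (hjk : j < k) :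
    xd n ⟨(j, k), hjk⟩ * xd n ⟨(i, j), hij⟩ = 0 ∧
    xd n ⟨(i, j), hij⟩ * xd n ⟨(j, k), hjk⟩ = 0 ∧
    xd n ⟨(i, k), hij.trans hjk⟩ * xd n ⟨(j, k), hjk⟩ = 0 ∧
    xd n ⟨(i, j), hij⟩ * xd n ⟨(i, k), hij.trans hjk⟩ = 0 := by
  set a := xd n ⟨(i, j), hij⟩
  set b := xd n ⟨(i, k), hij.trans hjk⟩
  set c := xd n ⟨(j, k), hjk⟩
  have h1 : a * c = b * c := by
    have := xd_rel (TrDualRel.tri₁ i j k hij hjk)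
    simpa [xd, map_mul, a, b, c] using this
  have h2 : b * c = c * a := by
    have := xd_rel (TrDualRel.tri₂ i j k hij hjk)
    simpa [xd, map_mul, a, b, c] using this
  have h3 : c * a = a * b := by
    have := xd_rel (TrDualRel.tri₃ i j k hij hjk)
    simpa [xd, map_mul, a, b, c] using this
  have ha : a * c = -(c * a) := xd_anti n _ _
  have h0 : c * a = 0 := by
    have hx : c * a = -(c * a) := (h1.trans h2).symm.trans ha
    have hadd : c * a + c * a = 0 := by
      nth_rewrite 1 [hx]
      exact neg_add_cancel _
    have h2x : (2 : ℂ) • (c * a) = 0 := by rw [two_smul]; exact hadd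
    rcases smul_eq_zero.1 h2x with h | h
    · exact absurd h (by norm_num)
    · exact h
  exact ⟨h0, (h1.trans h2).trans h0, h2.trans h0, h3 ▸ h0⟩

lemma xd_shared (n : ℕ) (e e' : TrEdge n)
    (h : e.1.1 = e'.1.1 ∨ e.1.1 = e'.1.2 ∨ e.1.2 = e'.1.1 ∨ e.1.2 = e'.1.2) :
    xd n e * xd n e' = 0 := by
  obtain ⟨⟨i, j⟩, hij⟩ := e
  obtain ⟨⟨k, l⟩, hkl⟩ := e'
  replace h : i = k ∨ i = l ∨ j = k ∨ j = l := h
  simp only at hij hkl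
  rcases h with rfl | rfl | rfl | rfl
  · rcases lt_trichotomy j l with hjl | rfl | hlj
    · exact (xd_tri n i j l hij hjl).2.2.2
    · exact xd_sq n _
    · exact xd_rev_zero n (xd_tri n i l j hkl hlj).2.2.2
  · exact (xd_tri n k i j hkl hij).1
  · exact (xd_tri n i j l hij hkl).2.1
  · rcases lt_trichotomy i k with hik | rfl | hki
    · exact (xd_tri n i k j hik hkl).2.2.1
    · exact xd_sq n _
    · exact xd_rev_zero n (xd_tri n k i j hki hij).2.2.1

lemma xd_mid_zero (n : ℕ) (p q : TrEdge n) (h : xd n p * xd n q = 0)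
    (M : List (TrEdge n)) (R : TrDual n) :
    xd n p * ((M.map (xd n)).prod * (xd n q * R)) = 0 := by
  induction M with
  | nil => simp [← mul_assoc, h]
  | cons m M ih =>
    simp only [List.map_cons, List.prod_cons]
    set P := (M.map (xd n)).prod with hP
    set X := xd n q * R with hX
    have t2 : (xd n m * xd n p) * (P * X) = 0 := by
      rw [mul_assoc, ih]
      exact mul_eq_zero_of_right _ rfl
    have key : (xd n p * xd n m) * (P * X) + (xd n m * xd n p) * (P * X) = 0 := by
      rw [← add_mul, xd_anti_add n p m]
      exact zero_mul _
    rw [t2, add_zero] at key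
    rw [mul_assoc, ← mul_assoc (xd n p)]
    exact key

lemma xd_list_zero (n : ℕ) (p q : TrEdge n) (h : xd n p * xd n q = 0)
    (L1 L2 L3 : List (TrEdge n)) :
    ((L1 ++ p :: (L2 ++ q :: L3)).map (xd n)).prod = 0 := by
  simp only [List.map_append, List.map_cons, List.prod_append, List.prod_cons]
  rw [xd_mid_zero n p q h L2 ((L3.map (xd n)).prod)]
  exact mul_eq_zero_of_right _ rfl

/-- In `U(tr_n)^!`, every monomial in the generators whose index graph contains a cycle is
zero; in particular `x_{12} x_{13} x_{23} = 0` in `U(tr_3)^!`. -/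
theorem trDual_cycle_monomials_vanish :
    (∀ (n : ℕ) (L : List (TrEdge n)),
      ¬ (SimpleGraph.fromEdgeSet
          {e : Sym2 (Fin n) | ∃ p ∈ L, e = s(p.1.1, p.1.2)}).IsAcyclic →
      (L.map (xd n)).prod = 0) ∧
    xd 3 ⟨(0, 1), by decide⟩ * xd 3 ⟨(0, 2), by decide⟩ * xd 3 ⟨(1, 2), by decide⟩ = 0 := by

  constructor
  · intro n L hcyc
    simp only [SimpleGraph.IsAcyclic] at hcyc
    push_neg at hcyc
    obtain ⟨v, c, hc⟩ := hcyc
    cases c with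
    | nil => exact (hc.ne_nil rfl).elim
    | @cons _ u _ h p =>
      cases p with
      | nil => exact (h.ne rfl).elim
      | @cons _ t _ h' p2 =>
        have hed : s(v, u) ≠ s(u, t) := by
          have hnd := hc.isCircuit.isTrail.edges_nodup
          simp only [SimpleGraph.Walk.edges_cons, List.nodup_cons, List.mem_cons] at hnd
          exact fun hh => hnd.1 (Or.inl hh)
        rw [SimpleGraph.fromEdgeSet_adj] at h h'
        obtain ⟨⟨p, hpL, hpe⟩, hvu⟩ := h
        obtain ⟨⟨q, hqL, hqe⟩, hut⟩ := h'
        have hpq : p ≠ q := by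
          rintro rfl
          exact hed (hpe.trans hqe.symm)
        have hu1 : u = p.1.1 ∨ u = p.1.2 := by
          have hm : u ∈ s(p.1.1, p.1.2) := by
            rw [← hpe]; exact Sym2.mem_mk_right v u
          exact Sym2.mem_iff.1 hm
        have hu2 : u = q.1.1 ∨ u = q.1.2 := by
          have hm : u ∈ s(q.1.1, q.1.2) := by
            rw [← hqe]; exact Sym2.mem_mk_left u t
          exact Sym2.mem_iff.1 hm
        have hsh : p.1.1 = q.1.1 ∨ p.1.1 = q.1.2 ∨ p.1.2 = q.1.1 ∨ p.1.2 = q.1.2 := by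
          rcases hu1 with h1 | h1 <;> rcases hu2 with h2 | h2
          · exact Or.inl (h1.symm.trans h2)
          · exact Or.inr (Or.inl (h1.symm.trans h2))
          · exact Or.inr (Or.inr (Or.inl (h1.symm.trans h2)))
          · exact Or.inr (Or.inr (Or.inr (h1.symm.trans h2)))
        have hsh' : q.1.1 = p.1.1 ∨ q.1.1 = p.1.2 ∨ q.1.2 = p.1.1 ∨ q.1.2 = p.1.2 := by
          rcases hsh with h1 | h1 | h1 | h1
          · exact Or.inl h1.symm
          · exact Or.inr (Or.inr (Or.inl h1.symm))
          · exact Or.inr (Or.inl h1.symm)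
          · exact Or.inr (Or.inr (Or.inr h1.symm))
        obtain ⟨l1, l2, rfl⟩ := List.append_of_mem hpL
        rcases List.mem_append.1 hqL with hq1 | hq2
        · obtain ⟨m1, m2, rfl⟩ := List.append_of_mem hq1
          have hre : (m1 ++ q :: m2) ++ p :: l2 = m1 ++ q :: (m2 ++ p :: l2) := by
            simp
          rw [hre]
          exact xd_list_zero n q p (xd_shared n q p hsh') m1 m2 l2
        · rcases List.mem_cons.1 hq2 with rfl | hq2'
          · exact (hpq rfl).elim
          · obtain ⟨m1, m2, rfl⟩ := List.append_of_mem hq2'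
            exact xd_list_zero n p q (xd_shared n p q hsh) l1 m1 m2
  · have h01 : xd 3 ⟨(0, 1), by decide⟩ * xd 3 ⟨(0, 2), by decide⟩ = 0 :=
      xd_shared 3 _ _ (Or.inl rfl)
    rw [h01]
    exact zero_mul _
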